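/- arXiv:2005.11320 — 3 statements merged into one kernel-verified Lean document; each statement's English description precedes it below -/
import Mathlib

section
/- Simple Path Criterion (bridge outage, 'only if' direction): fix a line l = (i,j) ∈ E, a bus ĵ ∈ N, and a proportional control α. If for every participating bus k (i.e., every k with α_k > 0) there is no simple path in G from ĵ to k that contains line l, then Σ_{k∈N} α_k D_{l,kĵ} = 0, and this holds for every choice of positive susceptances B_l > 0. -/
open Matrix MeasureTheory

variable {n m : ℕ}

/-- Incidence matrix of an oriented network with buses `Fin (n+1)` (bus `Fin.last n` is the
reference bus) and oriented lines indexed by `Fin m` with endpoint maps `src`, `tgt`. -/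
def incM (src tgt : Fin m → Fin (n+1)) : Matrix (Fin (n+1)) (Fin m) ℝ :=
  Matrix.of fun i l => if src l = i then 1 else if tgt l = i then -1 else 0

/-- The matrix `A` built from a Laplacian `L`: its top-left `n × n` block is the inverse of the
reduced Laplacian (obtained by deleting the last row and column) and all other entries are `0`. -/
noncomputable def AmatL (L : Matrix (Fin (n+1)) (Fin (n+1)) ℝ) : Matrix (Fin (n+1)) (Fin (n+1)) ℝ :=
  Matrix.of fun i j =>
    if h : i ≠ Fin.last n ∧ j ≠ Fin.last n then
      (L.submatrix Fin.castSucc Fin.castSucc)⁻¹ (i.castPred h.1) (j.castPred h.2)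
    else 0

/-- The matrix `A` of the network with susceptance vector `b`. -/
noncomputable def Amat (src tgt : Fin m → Fin (n+1)) (b : Fin m → ℝ) : Matrix (Fin (n+1)) (Fin (n+1)) ℝ :=
  AmatL (incM src tgt * Matrix.diagonal b * (incM src tgt)ᵀ)

/-- Power transfer distribution factor `D_{l, k ĵ}`. -/
noncomputable def ptdf (src tgt : Fin m → Fin (n+1)) (b : Fin m → ℝ) (l : Fin m) (k jh : Fin (n+1)) : ℝ :=
  b l * (Amat src tgt b (src l) k + Amat src tgt b (tgt l) jh
       - Amat src tgt b (src l) jh - Amat src tgt b (tgt l) k)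

/-- The underlying simple graph of the network. -/
def netGraph (src tgt : Fin m → Fin (n+1)) : SimpleGraph (Fin (n+1)) :=
  SimpleGraph.fromRel fun a c => ∃ l, src l = a ∧ tgt l = c

/-- There is a simple path in the network from `jh` to `k` that contains line `l`. -/
def PathThrough (src tgt : Fin m → Fin (n+1)) (jh k : Fin (n+1)) (l : Fin m) : Prop :=
  ∃ w : (netGraph src tgt).Walk jh k, w.IsPath ∧ s(src l, tgt l) ∈ w.edges

/-- Lines `e₁` and `e₂` belong to the same block: they are equal or lie on a common simple cycle. -/
def sameBlock (src tgt : Fin m → Fin (n+1)) (e₁ e₂ : Fin m) : Prop :=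
  e₁ = e₂ ∨ ∃ (v : Fin (n+1)) (c : (netGraph src tgt).Walk v v),
    c.IsCycle ∧ s(src e₁, tgt e₁) ∈ c.edges ∧ s(src e₂, tgt e₂) ∈ c.edges

/-- A cut vertex: a vertex whose removal disconnects the graph. -/
def IsCutVertex {V : Type*} (G : SimpleGraph V) (v : V) : Prop :=
  ¬ (G.induce {w : V | w ≠ v}).Connected

/-- The subgraph of the network with only the lines in `S`. -/
def netGraphOn (src tgt : Fin m → Fin (n+1)) (S : Set (Fin m)) : SimpleGraph (Fin (n+1)) :=
  SimpleGraph.fromRel fun a c => ∃ l ∈ S, src l = a ∧ tgt l = c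

def maskIn (F : Finset (Fin m)) (b : Fin m → ℝ) : Fin m → ℝ := fun l => if l ∈ F then b l else 0
def maskOut (F : Finset (Fin m)) (b : Fin m → ℝ) : Fin m → ℝ := fun l => if l ∈ F then 0 else b l

/-- Column submatrix `C_F` (columns outside `F` zeroed out). -/
def CFmat (src tgt : Fin m → Fin (n+1)) (F : Finset (Fin m)) : Matrix (Fin (n+1)) (Fin m) ℝ :=
  Matrix.of fun i l => if l ∈ F then incM src tgt i l else 0

/-- Column submatrix `C_{−F}` (columns in `F` zeroed out). -/
def CmFmat (src tgt : Fin m → Fin (n+1)) (F : Finset (Fin m)) : Matrix (Fin (n+1)) (Fin m) ℝ :=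
  Matrix.of fun i l => if l ∈ F then 0 else incM src tgt i l

/-- Diagonal susceptance matrix `B_F`. -/
def BFmat (b : Fin m → ℝ) (F : Finset (Fin m)) : Matrix (Fin m) (Fin m) ℝ :=
  Matrix.diagonal (maskIn F b)

/-- Diagonal susceptance matrix `B_{−F}`. -/
def BmFmat (b : Fin m → ℝ) (F : Finset (Fin m)) : Matrix (Fin m) (Fin m) ℝ :=
  Matrix.diagonal (maskOut F b)

/-- The matrix `A_{−F}` of the post-contingency network `(N, E ∖ F)`. -/
noncomputable def AmFmat (src tgt : Fin m → Fin (n+1)) (b : Fin m → ℝ) (F : Finset (Fin m)) :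
    Matrix (Fin (n+1)) (Fin (n+1)) ℝ :=
  AmatL (CmFmat src tgt F * BmFmat b F * (CmFmat src tgt F)ᵀ)

/-- The `k`-th standard unit vector of `ℝ^{n+1}`. -/
def evec (k : Fin (n+1)) : Fin (n+1) → ℝ := Pi.single k 1

/-!
Put `p = α - e_ĵ` and `u = A p`. Since `L̄` is invertible and the columns of `L` sum to zero,
`L u = p`: the DC flow `f_e = B_e (u_{src e} - u_{tgt e})` has net injection `p`, and
`∑ α_k D_{l,kĵ} = f_l`. If `f_l ≠ 0`, follow the flow. Downhill from the downstream end of `l`,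
every bus but `ĵ` has `p ≥ 0`, so flow entering it must leave towards a lower bus; the walk ends
at the only sink `ĵ`. Uphill from the upstream end it ends at a bus with `p > 0`, hence `α > 0`.
The potential `u` is strictly monotone along the joined walk, so it is a simple path through `l`.
-/

open Finset SimpleGraph

theorem SimpleGraph.Walk.isPath_of_isChain_support {V β : Type*} [Preorder β] {G : SimpleGraph V}
    {a c : V} (w : G.Walk a c) (f : V → β) (h : w.support.IsChain fun x y => f x < f y) :
    w.IsPath := by
  have : Trans (fun x y => f x < f y) (fun x y => f x < f y) (fun x y => f x < f y) :=
    ⟨lt_trans⟩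
  rw [Walk.isPath_def]
  exact (List.isChain_iff_pairwise.mp h).imp fun hxy => ne_of_apply_ne f hxy.ne

lemma Matrix.mulVec_snoc_zero_castSucc {R : Type*} [NonUnitalNonAssocSemiring R]
    (M : Matrix (Fin (n+1)) (Fin (n+1)) R) (x : Fin n → R) (i : Fin n) :
    (M *ᵥ (Fin.snoc x 0 : Fin (n+1) → R)) i.castSucc =
      (M.submatrix Fin.castSucc Fin.castSucc *ᵥ x) i := by
  simp [mulVec, dotProduct, Fin.sum_univ_castSucc]

lemma Matrix.snoc_zero_dotProduct_mulVec {R : Type*} [NonUnitalNonAssocSemiring R]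
    (M : Matrix (Fin (n+1)) (Fin (n+1)) R) (x : Fin n → R) :
    (Fin.snoc x 0 : Fin (n+1) → R) ⬝ᵥ (M *ᵥ Fin.snoc x 0) =
      x ⬝ᵥ (M.submatrix Fin.castSucc Fin.castSucc *ᵥ x) := by
  rw [dotProduct, Fin.sum_univ_castSucc]
  simp [mulVec_snoc_zero_castSucc, dotProduct]

lemma AmatL_mulVec (L : Matrix (Fin (n+1)) (Fin (n+1)) ℝ) (p : Fin (n+1) → ℝ) :
    AmatL L *ᵥ p =
      Fin.snoc ((L.submatrix Fin.castSucc Fin.castSucc)⁻¹ *ᵥ fun i => p i.castSucc) 0 := by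
  ext v
  induction v using Fin.lastCases with
  | last => simp [AmatL, mulVec, dotProduct]
  | cast i => simp [AmatL, mulVec, dotProduct, Fin.sum_univ_castSucc]

lemma mulVec_AmatL_mulVec {L : Matrix (Fin (n+1)) (Fin (n+1)) ℝ}
    (hL : IsUnit (L.submatrix Fin.castSucc Fin.castSucc).det)
    (hsum : ∀ w, ∑ v, (L *ᵥ w) v = 0) {p : Fin (n+1) → ℝ} (hp : ∑ v, p v = 0) :
    L *ᵥ (AmatL L *ᵥ p) = p := by
  have hcast : ∀ i : Fin n, (L *ᵥ (AmatL L *ᵥ p)) i.castSucc = p i.castSucc := fun i => by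
    rw [AmatL_mulVec, mulVec_snoc_zero_castSucc, mulVec_mulVec, mul_nonsing_inv _ hL,
      one_mulVec]
  ext v
  induction v using Fin.lastCases with
  | cast i => exact hcast i
  | last =>
    have h := hsum (AmatL L *ᵥ p)
    rw [Fin.sum_univ_castSucc] at h hp
    simp only [hcast] at h
    linarith

section Incidence

variable (src tgt : Fin m → Fin (n+1))

lemma incM_transpose_row (hsl : ∀ l, src l ≠ tgt l) (e : Fin m) :
    (incM src tgt)ᵀ e = Pi.single (src e) 1 - Pi.single (tgt e) 1 := by
  ext v
  simp only [transpose_apply, incM, of_apply, Pi.sub_apply, Pi.single_apply, eq_comm (a := v)]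
  split_ifs with hs ht <;> first | exact absurd (hs.trans ht.symm) (hsl e) | simp

lemma incM_transpose_mulVec (hsl : ∀ l, src l ≠ tgt l) (u : Fin (n+1) → ℝ) (e : Fin m) :
    ((incM src tgt)ᵀ *ᵥ u) e = u (src e) - u (tgt e) := by
  change (incM src tgt)ᵀ e ⬝ᵥ u = _
  rw [incM_transpose_row src tgt hsl, sub_dotProduct, single_one_dotProduct, single_one_dotProduct]

lemma sum_incM_mulVec (hsl : ∀ l, src l ≠ tgt l) (f : Fin m → ℝ) :
    ∑ v, (incM src tgt *ᵥ f) v = 0 := by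
  have hcol : (1 : Fin (n+1) → ℝ) ᵥ* incM src tgt = 0 := by
    ext e
    rw [← mulVec_transpose, incM_transpose_mulVec src tgt hsl]
    simp
  rw [← one_dotProduct, dotProduct_mulVec, hcol, zero_dotProduct]

def lineFlow (b : Fin m → ℝ) (u : Fin (n+1) → ℝ) : Fin m → ℝ :=
  fun e => b e * (u (src e) - u (tgt e))

lemma lineFlow_neg (b : Fin m → ℝ) (u : Fin (n+1) → ℝ) :
    lineFlow src tgt b (-u) = -lineFlow src tgt b u := by
  ext e
  simp only [lineFlow, Pi.neg_apply]
  ring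

lemma laplacian_mulVec (hsl : ∀ l, src l ≠ tgt l) (b : Fin m → ℝ) (u : Fin (n+1) → ℝ) :
    (incM src tgt * diagonal b * (incM src tgt)ᵀ) *ᵥ u =
      incM src tgt *ᵥ lineFlow src tgt b u := by
  have : lineFlow src tgt b u = diagonal b *ᵥ ((incM src tgt)ᵀ *ᵥ u) := by
    ext e
    rw [mulVec_diagonal, incM_transpose_mulVec src tgt hsl]
    rfl
  rw [this, mulVec_mulVec, mulVec_mulVec]

lemma dotProduct_laplacian_mulVec (hsl : ∀ l, src l ≠ tgt l) (b : Fin m → ℝ)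
    (u : Fin (n+1) → ℝ) :
    u ⬝ᵥ ((incM src tgt * diagonal b * (incM src tgt)ᵀ) *ᵥ u) =
      ∑ e, b e * (u (src e) - u (tgt e)) ^ 2 := by
  rw [laplacian_mulVec src tgt hsl, dotProduct_mulVec, ← mulVec_transpose, dotProduct]
  refine Finset.sum_congr rfl fun e _ => ?_
  rw [incM_transpose_mulVec src tgt hsl, lineFlow]
  ring

lemma netGraph_adj_of_sym2_eq (hsl : ∀ l, src l ≠ tgt l) {v w : Fin (n+1)} {e : Fin m}
    (h : s(v, w) = s(src e, tgt e)) : (netGraph src tgt).Adj v w := by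
  rw [netGraph, fromRel_adj]
  rcases Sym2.eq_iff.mp h with ⟨rfl, rfl⟩ | ⟨rfl, rfl⟩
  · exact ⟨hsl e, Or.inl ⟨e, rfl, rfl⟩⟩
  · exact ⟨(hsl e).symm, Or.inr ⟨e, rfl, rfl⟩⟩

lemma eq_of_forall_line_eq (hconn : (netGraph src tgt).Connected) {β : Type*}
    (g : Fin (n+1) → β) (hg : ∀ e, g (src e) = g (tgt e)) (v w : Fin (n+1)) : g v = g w := by
  obtain ⟨p⟩ := hconn.preconnected v w
  induction p with
  | nil => rfl
  | cons h _ ih =>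
    refine Eq.trans ?_ ih
    rw [netGraph, fromRel_adj] at h
    obtain ⟨_, ⟨e, rfl, rfl⟩ | ⟨e, rfl, rfl⟩⟩ := h
    exacts [hg e, (hg e).symm]

lemma posDef_reducedLaplacian (hsl : ∀ l, src l ≠ tgt l) (hconn : (netGraph src tgt).Connected)
    {b : Fin m → ℝ} (hb : ∀ e, 0 < b e) :
    ((incM src tgt * diagonal b * (incM src tgt)ᵀ).submatrix
      Fin.castSucc Fin.castSucc).PosDef := by
  refine posDef_iff_dotProduct_mulVec.mpr ⟨?_, fun x hx => ?_⟩
  · have := isHermitian_mul_mul_conjTranspose (incM src tgt) (isHermitian_diagonal b)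
    rw [conjTranspose_eq_transpose_of_trivial] at this
    exact this.submatrix _
  set y : Fin (n+1) → ℝ := Fin.snoc x 0
  rw [star_trivial, ← snoc_zero_dotProduct_mulVec, dotProduct_laplacian_mulVec src tgt hsl]
  have hnonneg : ∀ e ∈ univ, 0 ≤ b e * (y (src e) - y (tgt e)) ^ 2 :=
    fun e _ => mul_nonneg (hb e).le (sq_nonneg _)
  refine (sum_nonneg hnonneg).lt_of_ne fun h0 => hx ?_
  have hline : ∀ e, y (src e) = y (tgt e) := fun e => by
    have := (sum_eq_zero_iff_of_nonneg hnonneg).mp h0.symm e (mem_univ e)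
    simpa [(hb e).ne', sub_eq_zero] using this
  ext i
  simpa [y] using eq_of_forall_line_eq src tgt hconn y hline i.castSucc (Fin.last n)

end Incidence

lemma laplacian_mulVec_Amat_mulVec (src tgt : Fin m → Fin (n+1)) (hsl : ∀ l, src l ≠ tgt l)
    (hconn : (netGraph src tgt).Connected) {b : Fin m → ℝ} (hb : ∀ e, 0 < b e)
    {p : Fin (n+1) → ℝ} (hp : ∑ v, p v = 0) :
    incM src tgt *ᵥ lineFlow src tgt b (Amat src tgt b *ᵥ p) = p := by
  rw [← laplacian_mulVec src tgt hsl]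
  refine mulVec_AmatL_mulVec (posDef_reducedLaplacian src tgt hsl hconn hb).det_pos.ne'.isUnit
    (fun w => ?_) hp
  rw [laplacian_mulVec src tgt hsl]
  exact sum_incM_mulVec src tgt hsl _

lemma sum_mul_ptdf (src tgt : Fin m → Fin (n+1)) (b : Fin m → ℝ) (l : Fin m)
    (jhat : Fin (n+1)) {α : Fin (n+1) → ℝ} (hα : ∑ k, α k = 1) :
    ∑ k, α k * ptdf src tgt b l k jhat =
      lineFlow src tgt b (Amat src tgt b *ᵥ (α - Pi.single jhat 1)) l := by
  set A := Amat src tgt b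
  have hA : ∀ v, (A *ᵥ α) v = ∑ k, α k * A v k := fun v => by
    simp only [mulVec, dotProduct, mul_comm]
  have hterm : ∀ k, α k * ptdf src tgt b l k jhat =
      b l * (α k * A (src l) k) - b l * (α k * A (tgt l) k)
        + (b l * (A (tgt l) jhat - A (src l) jhat)) * α k := fun k => by
    simp only [ptdf, A]
    ring
  rw [lineFlow, mulVec_sub, mulVec_single_one, Pi.sub_apply, Pi.sub_apply, hA, hA, col_apply,
    col_apply, Finset.sum_congr rfl fun k _ => hterm k, sum_add_distrib, sum_sub_distrib,
    ← mul_sum, ← mul_sum, ← mul_sum, hα]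
  ring

section Descent

variable {src tgt : Fin m → Fin (n+1)} {b : Fin m → ℝ} {u p : Fin (n+1) → ℝ}

lemma incM_mul_lineFlow_of_sym2_eq (hsl : ∀ l, src l ≠ tgt l) {v w : Fin (n+1)} {e : Fin m}
    (h : s(v, w) = s(src e, tgt e)) :
    incM src tgt v e * lineFlow src tgt b u e = b e * (u v - u w) := by
  have hcol := congrFun (incM_transpose_row src tgt hsl e) v
  simp only [transpose_apply] at hcol
  rcases Sym2.eq_iff.mp h with ⟨rfl, rfl⟩ | ⟨rfl, rfl⟩
  · simp [hcol, lineFlow, hsl e]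
  · simp [hcol, lineFlow, (hsl e).symm]
    ring

lemma exists_sym2_eq_of_incM_ne_zero {v : Fin (n+1)} {e : Fin m} (h : incM src tgt v e ≠ 0) :
    ∃ w, s(v, w) = s(src e, tgt e) := by
  by_cases hs : src e = v
  · exact ⟨tgt e, by rw [hs]⟩
  · have ht : tgt e = v := by
      by_contra ht
      exact h (by simp [incM, hs, ht])
    exact ⟨src e, by rw [ht, Sym2.eq_swap]⟩

lemma exists_adj_lt_of_inflow (hsl : ∀ l, src l ≠ tgt l) (hb : ∀ e, 0 < b e)
    (hdiv : incM src tgt *ᵥ lineFlow src tgt b u = p) {v : Fin (n+1)}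
    (hin : ∃ e, incM src tgt v e * lineFlow src tgt b u e < 0) (hpv : 0 ≤ p v) :
    ∃ w, (netGraph src tgt).Adj v w ∧ u w < u v ∧
      ∃ e, incM src tgt w e * lineFlow src tgt b u e < 0 := by
  obtain ⟨e₀, he₀⟩ := hin
  obtain ⟨e, he⟩ : ∃ e, 0 < incM src tgt v e * lineFlow src tgt b u e := by
    by_contra! hout
    have := Finset.sum_lt_sum (fun e _ => hout e) ⟨e₀, mem_univ _, he₀⟩
    rw [sum_const_zero] at this
    exact (congrFun hdiv v ▸ hpv).not_gt this
  obtain ⟨w, hvw⟩ := exists_sym2_eq_of_incM_ne_zero (left_ne_zero_of_mul he.ne')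
  have hwv : s(w, v) = s(src e, tgt e) := Sym2.eq_swap.trans hvw
  rw [incM_mul_lineFlow_of_sym2_eq hsl hvw] at he
  have hlt : u w < u v := sub_pos.mp (pos_of_mul_pos_right he (hb e).le)
  refine ⟨w, netGraph_adj_of_sym2_eq src tgt hsl hvw, hlt, e, ?_⟩
  rw [incM_mul_lineFlow_of_sym2_eq hsl hwv]
  exact mul_neg_of_pos_of_neg (hb e) (sub_neg.mpr hlt)

lemma exists_descending_walk_to_sink (hsl : ∀ l, src l ≠ tgt l) (hb : ∀ e, 0 < b e)
    (hdiv : incM src tgt *ᵥ lineFlow src tgt b u = p) (v : Fin (n+1))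
    (hin : ∃ e, incM src tgt v e * lineFlow src tgt b u e < 0) :
    ∃ z, ∃ w : (netGraph src tgt).Walk v z, p z < 0 ∧
      w.support.IsChain fun x y => u y < u x := by
  have : IsTrans (Fin (n+1)) (fun x y => u x < u y) := ⟨fun _ _ _ => lt_trans⟩
  have : Std.Irrefl (fun x y : Fin (n+1) => u x < u y) := ⟨fun x => lt_irrefl (u x)⟩
  induction v using (Finite.wellFounded_of_trans_of_irrefl fun x y => u x < u y).induction with
  | _ v ih =>
  by_cases hpv : p v < 0
  · exact ⟨v, Walk.nil, hpv, by simp⟩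
  obtain ⟨w, hadj, hlt, hwin⟩ := exists_adj_lt_of_inflow hsl hb hdiv hin (not_lt.mp hpv)
  obtain ⟨z, q, hz, hq⟩ := ih w hlt hwin
  refine ⟨z, Walk.cons hadj q, hz, ?_⟩
  rw [Walk.support_cons, ← Walk.cons_tail_support q, List.isChain_cons_cons,
    Walk.cons_tail_support]
  exact ⟨hlt, hq⟩

lemma exists_pathThrough_of_lineFlow_ne_zero (hsl : ∀ l, src l ≠ tgt l) (hb : ∀ e, 0 < b e)
    (hdiv : incM src tgt *ᵥ lineFlow src tgt b u = p) {jhat : Fin (n+1)}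
    (hsink : ∀ z, p z < 0 → z = jhat) {l : Fin m} (hl : lineFlow src tgt b u l ≠ 0) :
    ∃ k, 0 < p k ∧ PathThrough src tgt jhat k l := by
  obtain ⟨a, c, hac, hca⟩ : ∃ a c, s(c, a) = s(src l, tgt l) ∧ u c < u a := by
    rcases (sub_ne_zero.mp (right_ne_zero_of_mul hl)).lt_or_gt with h | h
    exacts [⟨tgt l, src l, rfl, h⟩, ⟨src l, tgt l, Sym2.eq_swap, h⟩]
  have hac' : s(a, c) = s(src l, tgt l) := Sym2.eq_swap.trans hac
  obtain ⟨z, down, hz, hdown⟩ := exists_descending_walk_to_sink hsl hb hdiv c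
    ⟨l, by rw [incM_mul_lineFlow_of_sym2_eq hsl hac]; nlinarith [hb l]⟩
  obtain rfl := hsink z hz
  -- reversing the potential reverses every flow, so the uphill walk is a downhill walk for `-u`
  have hdiv' : incM src tgt *ᵥ lineFlow src tgt b (-u) = -p := by
    rw [lineFlow_neg, mulVec_neg, hdiv]
  obtain ⟨k, up, hk, hup⟩ := exists_descending_walk_to_sink hsl hb hdiv' a
    ⟨l, by
      rw [incM_mul_lineFlow_of_sym2_eq hsl hac']
      simp only [Pi.neg_apply]
      nlinarith [hb l]⟩
  simp only [Pi.neg_apply, neg_lt_neg_iff] at hup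
  let path := down.reverse.append (Walk.cons (netGraph_adj_of_sym2_eq src tgt hsl hac) up)
  have hchain : path.support.IsChain fun x y => u x < u y := by
    rw [Walk.support_append, Walk.support_cons, List.tail_cons, Walk.support_reverse,
      List.isChain_append, List.isChain_reverse]
    refine ⟨hdown, hup, ?_⟩
    rw [List.getLast?_reverse, ← Walk.cons_tail_support down, ← Walk.cons_tail_support up]
    simpa only [List.head?_cons, Option.mem_def, Option.some.injEq, forall_eq'] using hca
  refine ⟨k, neg_neg_iff_pos.mp hk, path, path.isPath_of_isChain_support u hchain, ?_⟩
  simp [path, Walk.edges_append, ← hac]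

end Descent

/-- Simple Path Criterion, bridge outage, 'only if' direction.
If for every participating bus `k` there is no simple path in the network from `jhat` to `k`
containing line `l`, then `∑_k α_k D_{l,kĵ} = 0` for every choice of positive susceptances. -/
theorem simple_path_criterion_only_if
    {n m : ℕ} (src tgt : Fin m → Fin (n+1)) (hsl : ∀ l, src l ≠ tgt l)
    (hconn : (netGraph src tgt).Connected)
    (α : Fin (n+1) → ℝ) (hα0 : ∀ k, 0 ≤ α k) (hα1 : ∑ k, α k = 1)
    (l : Fin m) (jhat : Fin (n+1))
    (hnopath : ∀ k, 0 < α k → ¬ PathThrough src tgt jhat k l) :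
    ∀ b : Fin m → ℝ, (∀ e, 0 < b e) → ∑ k, α k * ptdf src tgt b l k jhat = 0 := by
  intro b hb
  set p := α - Pi.single jhat 1
  have hp : ∑ v, p v = 0 := by simp [p, sum_sub_distrib, hα1]
  have hle : ∀ k, p k ≤ α k := fun k => by
    by_cases hk : k = jhat <;> simp [p, hk]
  have hsink : ∀ z, p z < 0 → z = jhat := fun z hz => by
    by_contra hne
    simp only [p, Pi.sub_apply, Pi.single_eq_of_ne hne, sub_zero] at hz
    exact (hα0 z).not_gt hz
  rw [sum_mul_ptdf src tgt b l jhat hα1]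
  by_contra hflow
  obtain ⟨k, hk, hpath⟩ := exists_pathThrough_of_lineFlow_ne_zero hsl hb
    (laplacian_mulVec_Amat_mulVec src tgt hsl hconn hb hp) hsink hflow
  exact hnopath k (hk.trans_le (hle k)) hpath
end

section
/- Bridge outage block localization (non-impacted blocks): under a single bridge outage handled by proportional control, if a block E_r of G is not on any simple path between bus ĵ and a participating bus (i.e., for every participating bus k, no simple path in G from ĵ to k contains a line of E_r), then f̃_l = f_l for every line l ∈ E_r, and this holds for every choice of positive susceptances. -/
open Matrix MeasureTheory

variable {n m : ℕ}

/-! The flow change `ft - f` is a potential flow `B Cᵀ (θt - θ)` whose only sources and sinks are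
`ĵ` and the participating buses, with opposite signs. Its nonzero lines lead strictly downhill in
the potential, so from a line carrying a nonzero change one can walk uphill to a source and
downhill to a sink; potentials keep the two halves disjoint, giving a simple path from `ĵ` to a
participating bus through that line. -/

open SimpleGraph

section PotentialFlow

variable {n m : ℕ} {src tgt : Fin m → Fin (n+1)} {b : Fin m → ℝ}

lemma incM_transpose_mulVec_apply (hsl : ∀ l, src l ≠ tgt l) (δ : Fin (n+1) → ℝ) (l : Fin m) :
    ((incM src tgt)ᵀ *ᵥ δ) l = δ (src l) - δ (tgt l) := by
  rw [mulVec, dotProduct, Fintype.sum_eq_add (src l) (tgt l) (hsl l)]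
  · simp [incM, hsl l, sub_eq_add_neg]
  · rintro i ⟨hs, ht⟩
    simp [incM, Ne.symm hs, Ne.symm ht]

lemma diagonal_mul_incM_transpose_mulVec_apply (hsl : ∀ l, src l ≠ tgt l) (δ : Fin (n+1) → ℝ)
    (l : Fin m) :
    ((diagonal b * (incM src tgt)ᵀ) *ᵥ δ) l = b l * (δ (src l) - δ (tgt l)) := by
  rw [← mulVec_mulVec, mulVec_diagonal, incM_transpose_mulVec_apply hsl]

lemma exists_edge_eq_of_incM_ne_zero {u : Fin (n+1)} {l : Fin m} (h : incM src tgt u l ≠ 0) :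
    ∃ w, s(src l, tgt l) = s(u, w) := by
  by_cases hs : src l = u
  · exact ⟨tgt l, by rw [hs]⟩
  by_cases ht : tgt l = u
  · exact ⟨src l, by rw [ht, Sym2.eq_swap]⟩
  simp [incM, hs, ht] at h

lemma incM_mul_sub_of_edge_eq {u w : Fin (n+1)} {l : Fin m} (hl : s(src l, tgt l) = s(u, w))
    (δ : Fin (n+1) → ℝ) :
    incM src tgt u l * (δ (src l) - δ (tgt l)) = δ u - δ w := by
  rcases Sym2.eq_iff.1 hl with ⟨rfl, rfl⟩ | ⟨rfl, rfl⟩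
  · simp [incM]
  · by_cases h : src l = tgt l <;> simp [incM, h]

lemma netGraph_adj_of_edge_eq {u w : Fin (n+1)} {l : Fin m} (hl : s(src l, tgt l) = s(u, w))
    (huw : u ≠ w) : (netGraph src tgt).Adj u w := by
  rcases Sym2.eq_iff.1 hl with ⟨rfl, rfl⟩ | ⟨rfl, rfl⟩
  · exact (fromRel_adj _ _ _).2 ⟨huw, Or.inl ⟨l, rfl, rfl⟩⟩
  · exact (fromRel_adj _ _ _).2 ⟨huw, Or.inr ⟨l, rfl, rfl⟩⟩

/-- Each line joining `u` to `w` contributes `b l * (δ u - δ w)` to the net outflow at `u`, which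
would be negative if no neighbour of `u` were lower. -/
lemma exists_downhill_of_uphill (hsl : ∀ l, src l ≠ tgt l) (hb : ∀ l, 0 < b l)
    {δ : Fin (n+1) → ℝ} {u : Fin (n+1)}
    (hdiv : 0 ≤ (incM src tgt *ᵥ ((diagonal b * (incM src tgt)ᵀ) *ᵥ δ)) u)
    (hup : ∃ l w, s(src l, tgt l) = s(u, w) ∧ δ u < δ w) :
    ∃ l w, s(src l, tgt l) = s(u, w) ∧ δ w < δ u := by
  by_contra! hflat
  obtain ⟨l₀, w₀, hl₀, hw₀⟩ := hup
  have hterm : ∀ l w, s(src l, tgt l) = s(u, w) →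
      incM src tgt u l * ((diagonal b * (incM src tgt)ᵀ) *ᵥ δ) l = b l * (δ u - δ w) := by
    intro l w hl
    rw [diagonal_mul_incM_transpose_mulVec_apply hsl, mul_left_comm, incM_mul_sub_of_edge_eq hl]
  have hle : ∀ l, incM src tgt u l * ((diagonal b * (incM src tgt)ᵀ) *ᵥ δ) l ≤ 0 := by
    intro l
    by_cases h : incM src tgt u l = 0
    · rw [h, zero_mul]
    obtain ⟨w, hw⟩ := exists_edge_eq_of_incM_ne_zero h
    rw [hterm l w hw]
    exact mul_nonpos_of_nonneg_of_nonpos (hb l).le (sub_nonpos.2 (hflat l w hw))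
  have hlt : incM src tgt u l₀ * ((diagonal b * (incM src tgt)ᵀ) *ᵥ δ) l₀ < 0 := by
    rw [hterm l₀ w₀ hl₀]
    exact mul_neg_of_pos_of_neg (hb l₀) (sub_neg.2 hw₀)
  exact hdiv.not_gt (Finset.sum_neg' (fun l _ => hle l) ⟨l₀, Finset.mem_univ _, hlt⟩)

lemma exists_isPath_to_sink (hsl : ∀ l, src l ≠ tgt l) (hb : ∀ l, 0 < b l)
    (δ : Fin (n+1) → ℝ) (u : Fin (n+1)) (hup : ∃ l w, s(src l, tgt l) = s(u, w) ∧ δ u < δ w) :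
    ∃ (k : Fin (n+1)) (p : (netGraph src tgt).Walk u k), p.IsPath ∧
      (incM src tgt *ᵥ ((diagonal b * (incM src tgt)ᵀ) *ᵥ δ)) k < 0 ∧
      ∀ v ∈ p.support, δ v ≤ δ u := by
  have hwf := @Finite.wellFounded_of_trans_of_irrefl _ _ (fun v w => δ v < δ w)
    ⟨fun _ _ _ => lt_trans⟩ ⟨fun _ => lt_irrefl _⟩
  induction u using hwf.induction with
  | _ u ih =>
  by_cases hsink : (incM src tgt *ᵥ ((diagonal b * (incM src tgt)ᵀ) *ᵥ δ)) u < 0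
  · exact ⟨u, .nil, .nil, hsink, by simp⟩
  obtain ⟨l, w, hl, hwu⟩ := exists_downhill_of_uphill hsl hb (not_lt.1 hsink) hup
  obtain ⟨k, p, hp, hk, hpδ⟩ := ih w hwu ⟨l, u, hl.trans Sym2.eq_swap, hwu⟩
  refine ⟨k, .cons (netGraph_adj_of_edge_eq hl (ne_of_apply_ne δ hwu.ne')) p,
    hp.cons fun hu => (hpδ u hu).not_gt hwu, hk, ?_⟩
  simp only [Walk.support_cons, List.forall_mem_cons]
  exact ⟨le_rfl, fun v hv => (hpδ v hv).trans hwu.le⟩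

lemma exists_isPath_to_source (hsl : ∀ l, src l ≠ tgt l) (hb : ∀ l, 0 < b l)
    (δ : Fin (n+1) → ℝ) (u : Fin (n+1)) (hdown : ∃ l w, s(src l, tgt l) = s(u, w) ∧ δ w < δ u) :
    ∃ (k : Fin (n+1)) (p : (netGraph src tgt).Walk u k), p.IsPath ∧
      0 < (incM src tgt *ᵥ ((diagonal b * (incM src tgt)ᵀ) *ᵥ δ)) k ∧
      ∀ v ∈ p.support, δ u ≤ δ v := by
  simpa [mulVec_neg] using exists_isPath_to_sink hsl hb (-δ) u (by simpa using hdown)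

theorem exists_isPath_mem_edges_of_flow_ne_zero (hsl : ∀ l, src l ≠ tgt l) (hb : ∀ l, 0 < b l)
    (δ : Fin (n+1) → ℝ) {l : Fin m} (hl : ((diagonal b * (incM src tgt)ᵀ) *ᵥ δ) l ≠ 0) :
    ∃ (kp km : Fin (n+1)) (W : (netGraph src tgt).Walk kp km), W.IsPath ∧
      0 < (incM src tgt *ᵥ ((diagonal b * (incM src tgt)ᵀ) *ᵥ δ)) kp ∧
      (incM src tgt *ᵥ ((diagonal b * (incM src tgt)ᵀ) *ᵥ δ)) km < 0 ∧
      s(src l, tgt l) ∈ W.edges := by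
  obtain ⟨a, v, hl_eq, hva⟩ : ∃ a v, s(src l, tgt l) = s(a, v) ∧ δ v < δ a := by
    rw [diagonal_mul_incM_transpose_mulVec_apply hsl] at hl
    rcases lt_or_gt_of_ne (sub_ne_zero.1 (right_ne_zero_of_mul hl)) with h | h
    exacts [⟨tgt l, src l, Sym2.eq_swap, h⟩, ⟨src l, tgt l, rfl, h⟩]
  obtain ⟨kp, p, hp, hkp, hpδ⟩ := exists_isPath_to_source hsl hb δ a ⟨l, v, hl_eq, hva⟩
  obtain ⟨km, q, hq, hkm, hqδ⟩ :=
    exists_isPath_to_sink hsl hb δ v ⟨l, a, hl_eq.trans Sym2.eq_swap, hva⟩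
  refine ⟨kp, km, p.reverse.append (.cons (netGraph_adj_of_edge_eq hl_eq
    (ne_of_apply_ne δ hva.ne')) q), ?_, hkp, hkm, by simp [hl_eq]⟩
  rw [Walk.isPath_def, Walk.support_append, Walk.support_reverse, Walk.support_cons,
    List.tail_cons, List.nodup_append]
  refine ⟨List.nodup_reverse.2 hp.support_nodup, hq.support_nodup, ?_⟩
  rintro x hx _ hy rfl
  exact ((hqδ x hy).trans_lt hva).not_ge (hpδ x (List.mem_reverse.1 hx))

end PotentialFlow

lemma sum_smul_evec {n : ℕ} (α : Fin (n+1) → ℝ) : ∑ k, α k • evec k = α := by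
  simp [evec, ← Pi.single_smul', Finset.univ_sum_single]

lemma eq_and_pos_or_eq_and_pos_of_smul_sub_evec {n : ℕ} {α : Fin (n+1) → ℝ} (hα0 : ∀ k, 0 ≤ α k)
    {j kp km : Fin (n+1)} {c : ℝ} (hkp : 0 < (c • (α - evec j)) kp)
    (hkm : (c • (α - evec j)) km < 0) :
    (kp = j ∧ 0 < α km) ∨ (km = j ∧ 0 < α kp) := by
  have hoff : ∀ k ≠ j, (c • (α - evec j)) k = c * α k := fun k hk => by simp [evec, hk]
  have hne : kp ≠ km := by rintro rfl; exact hkm.not_gt hkp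
  by_cases hp : kp = j
  · subst hp
    rw [hoff km hne.symm] at hkm
    exact Or.inl ⟨rfl, (hα0 km).lt_of_ne' fun h => by simp [h] at hkm⟩
  by_cases hm : km = j
  · subst hm
    rw [hoff kp hp] at hkp
    exact Or.inr ⟨rfl, (hα0 kp).lt_of_ne' fun h => by simp [h] at hkp⟩
  rw [hoff kp hp] at hkp
  rw [hoff km hm] at hkm
  rcases le_or_gt 0 c with hc | hc
  · linarith [mul_nonneg hc (hα0 km)]
  · linarith [mul_nonpos_of_nonpos_of_nonneg hc.le (hα0 kp)]

theorem bridge_outage_block_not_impacted_general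
    {n m : ℕ} (src tgt : Fin m → Fin (n+1)) (hsl : ∀ l, src l ≠ tgt l)
    (α : Fin (n+1) → ℝ) (hα0 : ∀ k, 0 ≤ α k)
    (jhat : Fin (n+1)) (flhat : ℝ)
    (Er : Set (Fin m))
    (hnot : ∀ k, 0 < α k → ∀ e ∈ Er, ¬ PathThrough src tgt jhat k e) :
    ∀ b : Fin m → ℝ, (∀ e, 0 < b e) →
    ∀ (p θ θt : Fin (n+1) → ℝ) (f ft : Fin m → ℝ),
      (incM src tgt).mulVec f = p + flhat • evec jhat →
      f = (Matrix.diagonal b * (incM src tgt)ᵀ).mulVec θ →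
      (incM src tgt).mulVec ft = p + flhat • ∑ k, α k • evec k →
      ft = (Matrix.diagonal b * (incM src tgt)ᵀ).mulVec θt →
      ∀ l ∈ Er, ft l = f l := by
  intro b hb p θ θt f ft hf hfθ hft hftθ l hl
  by_contra hne
  have hflow : ft - f = (diagonal b * (incM src tgt)ᵀ) *ᵥ (θt - θ) := by
    rw [mulVec_sub, ← hfθ, ← hftθ]
  have hdiv : incM src tgt *ᵥ (ft - f) = flhat • (α - evec jhat) := by
    rw [mulVec_sub, hf, hft, sum_smul_evec, smul_sub]
    abel
  obtain ⟨kp, km, W, hW, hkp, hkm, hlW⟩ := exists_isPath_mem_edges_of_flow_ne_zero hsl hb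
    (θt - θ) (by rw [← hflow]; exact sub_ne_zero.2 hne)
  rw [← hflow, hdiv] at hkp hkm
  rcases eq_and_pos_or_eq_and_pos_of_smul_sub_evec hα0 hkp hkm with ⟨rfl, hk⟩ | ⟨rfl, hk⟩
  · exact hnot km hk l hl ⟨W, hW, hlW⟩
  · exact hnot kp hk l hl ⟨W.reverse, hW.reverse, by simpa using hlW⟩

/-- bridge outage block localization, non-impacted blocks.
Under a single bridge outage at bus `jhat` handled by proportional control, if a block `Er` of
the network is not on any simple path between `jhat` and a participating bus, then the branch
flow is unchanged on every line of `Er`, for every choice of positive susceptances. -/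
theorem bridge_outage_block_not_impacted
    {n m : ℕ} (src tgt : Fin m → Fin (n+1)) (hsl : ∀ l, src l ≠ tgt l)
    (hconn : (netGraph src tgt).Connected)
    (α : Fin (n+1) → ℝ) (hα0 : ∀ k, 0 ≤ α k) (hα1 : ∑ k, α k = 1)
    (jhat : Fin (n+1)) (flhat : ℝ) (hflhat : flhat ≠ 0)
    (Er : Set (Fin m)) (hEr : ∃ e₀, Er = {e | sameBlock src tgt e₀ e})
    (hnot : ∀ k, 0 < α k → ∀ e ∈ Er, ¬ PathThrough src tgt jhat k e) :
    ∀ b : Fin m → ℝ, (∀ e, 0 < b e) →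
    ∀ (p θ θt : Fin (n+1) → ℝ) (f ft : Fin m → ℝ),
      (incM src tgt).mulVec f = p + flhat • evec jhat →
      f = (Matrix.diagonal b * (incM src tgt)ᵀ).mulVec θ →
      (incM src tgt).mulVec ft = p + flhat • ∑ k, α k • evec k →
      ft = (Matrix.diagonal b * (incM src tgt)ᵀ).mulVec θt →
      ∀ l ∈ Er, ft l = f l :=
  bridge_outage_block_not_impacted_general src tgt hsl α hα0 jhat flhat Er hnot
end

section
/- Woodbury relation between pre- and post-contingency matrices: if the matrix I − B_F C_F^T A C_F is invertible, then A_{−F} = A + A C_F (I − B_F C_F^T A C_F)^{−1} B_F C_F^T A. -/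
open Matrix MeasureTheory

variable {n m : ℕ}

/-! With `P` the matrix deleting the reference coordinate, `A = Pᵀ (P L Pᵀ)⁻¹ P` and likewise
`A_{−F} = Pᵀ (P L_{−F} Pᵀ)⁻¹ P`. Since `L_{−F} = L − C_F B_F C_Fᵀ`, the reduced post-contingency
Laplacian is a low-rank update of the reduced Laplacian, and the Woodbury identity, conjugated
by `P`, gives the formula. The reduced Laplacian is invertible because the quadratic form
`vᵀ L v = ∑ₗ b_l ((Cᵀ v)_l)²` vanishes only on vectors constant along every line, hence (by
connectivity) only on constants, and these vanish at the reference bus. -/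

namespace Matrix

variable {ι κ ν α : Type*} [Fintype ι] [Fintype κ] [CommRing α]

/-- Unlike `Matrix.add_mul_mul_inv_eq_sub`, `B` need not be invertible (`B_F` is singular). -/
theorem inv_sub_mul_mul_eq_add [DecidableEq ι] [DecidableEq κ] (A : Matrix ι ι α)
    (U : Matrix ι κ α) (B : Matrix κ κ α) (V : Matrix κ ι α) (hA : IsUnit A)
    (hW : IsUnit (1 - B * V * A⁻¹ * U)) :
    (A - U * B * V)⁻¹ = A⁻¹ + A⁻¹ * U * (1 - B * V * A⁻¹ * U)⁻¹ * B * V * A⁻¹ := by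
  have hW' : (1 : Matrix κ κ α)⁻¹ + -(B * V) * A⁻¹ * U = 1 - B * V * A⁻¹ * U := by
    rw [inv_one, Matrix.neg_mul, Matrix.neg_mul, ← sub_eq_add_neg]
  have h := add_mul_mul_inv_eq_sub A U 1 (-(B * V)) hA isUnit_one (hW' ▸ hW)
  rw [hW', Matrix.mul_one, Matrix.mul_neg, ← sub_eq_add_neg] at h
  rw [Matrix.mul_assoc U B V, h]
  simp only [Matrix.mul_neg, Matrix.neg_mul, sub_neg_eq_add, Matrix.mul_assoc]

noncomputable def compressedInv [Fintype ν] [DecidableEq ν] (P : Matrix ν ι α)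
    (L : Matrix ι ι α) : Matrix ι ι α :=
  Pᵀ * (P * L * Pᵀ)⁻¹ * P

theorem compressedInv_sub_mul_mul [Fintype ν] [DecidableEq ν] [DecidableEq κ]
    (P : Matrix ν ι α) (L : Matrix ι ι α) (U : Matrix ι κ α) (B : Matrix κ κ α) (V : Matrix κ ι α)
    (hL : IsUnit (P * L * Pᵀ)) (hW : IsUnit (1 - B * V * compressedInv P L * U)) :
    compressedInv P (L - U * B * V) = compressedInv P L +
      compressedInv P L * U * (1 - B * V * compressedInv P L * U)⁻¹ * B * V *
        compressedInv P L := by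
  have hW' : B * (V * Pᵀ) * (P * L * Pᵀ)⁻¹ * (P * U) = B * V * compressedInv P L * U := by
    simp only [compressedInv, Matrix.mul_assoc]
  have hsplit : P * (L - U * B * V) * Pᵀ = P * L * Pᵀ - P * U * B * (V * Pᵀ) := by
    simp only [Matrix.mul_sub, Matrix.sub_mul, Matrix.mul_assoc]
  rw [compressedInv, hsplit, inv_sub_mul_mul_eq_add _ _ _ _ hL (hW'.symm ▸ hW), hW']
  simp only [compressedInv, Matrix.mul_add, Matrix.add_mul, Matrix.mul_assoc]

theorem dotProduct_mul_diagonal_mul_transpose_mulVec [DecidableEq κ] (C : Matrix ι κ α)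
    (b : κ → α) (v : ι → α) : v ⬝ᵥ ((C * diagonal b * Cᵀ) *ᵥ v) = ∑ l, b l * (v ᵥ* C) l ^ 2 := by
  rw [← mulVec_mulVec, ← mulVec_mulVec, dotProduct_mulVec, mulVec_transpose, dotProduct]
  simp only [mulVec_diagonal]
  exact Finset.sum_congr rfl fun l _ => by ring

theorem dotProduct_mul_mul_transpose_mulVec (P : Matrix κ ι α) (L : Matrix ι ι α) (x : κ → α) :
    x ⬝ᵥ ((P * L * Pᵀ) *ᵥ x) = (Pᵀ *ᵥ x) ⬝ᵥ (L *ᵥ (Pᵀ *ᵥ x)) := by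
  rw [mulVec_mulVec, dotProduct_mulVec, dotProduct_mulVec, mulVec_transpose, vecMul_vecMul,
    Matrix.mul_assoc]

end Matrix

theorem SimpleGraph.Reachable.eq_of_forall_adj {V β : Type*} {G : SimpleGraph V} {f : V → β}
    (hf : ∀ a c, G.Adj a c → f a = f c) {u v : V} (h : G.Reachable u v) : f u = f v := by
  obtain ⟨w⟩ := h
  induction w with
  | nil => rfl
  | cons hadj _ ih => exact (hf _ _ hadj).trans ih

def dropLastMat (n : ℕ) : Matrix (Fin n) (Fin (n+1)) ℝ :=
  (1 : Matrix (Fin (n+1)) (Fin (n+1)) ℝ).submatrix Fin.castSucc id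

theorem transpose_dropLastMat_mulVec_castSucc (x : Fin n → ℝ) (i : Fin n) :
    ((dropLastMat n)ᵀ *ᵥ x) i.castSucc = x i := by
  simp [dropLastMat, mulVec, dotProduct, one_apply]

theorem transpose_dropLastMat_mulVec_last (x : Fin n → ℝ) :
    ((dropLastMat n)ᵀ *ᵥ x) (Fin.last n) = 0 := by
  simp [dropLastMat, mulVec, dotProduct, one_apply, (Fin.castSucc_lt_last _).ne]

theorem dropLastMat_mul_mul_transpose (M : Matrix (Fin (n+1)) (Fin (n+1)) ℝ) :
    dropLastMat n * M * (dropLastMat n)ᵀ = M.submatrix Fin.castSucc Fin.castSucc := by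
  ext i j
  simp [dropLastMat, mul_apply, one_apply]

theorem AmatL_eq_compressedInv (L : Matrix (Fin (n+1)) (Fin (n+1)) ℝ) :
    AmatL L = compressedInv (dropLastMat n) L := by
  rw [compressedInv, dropLastMat_mul_mul_transpose]
  ext i j
  induction i using Fin.lastCases <;> induction j using Fin.lastCases <;>
    simp [AmatL, dropLastMat, mul_apply, one_apply, (Fin.castSucc_lt_last _).ne']

theorem eq_of_vecMul_incM_eq_zero (src tgt : Fin m → Fin (n+1)) (v : Fin (n+1) → ℝ) (l : Fin m)
    (h : (v ᵥ* incM src tgt) l = 0) : v (src l) = v (tgt l) := by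
  by_cases hl : src l = tgt l
  · exact congrArg v hl
  · have : (v ᵥ* incM src tgt) l = v (src l) - v (tgt l) := by
      simp [vecMul, dotProduct, incM, mul_ite, Finset.sum_ite, Finset.filter_eq, hl,
        sub_eq_add_neg]
    linarith

theorem eq_of_dotProduct_laplacian_mulVec_eq_zero (src tgt : Fin m → Fin (n+1)) (b : Fin m → ℝ)
    (hb : ∀ l, 0 < b l) (hconn : (netGraph src tgt).Connected) (v : Fin (n+1) → ℝ)
    (hv : v ⬝ᵥ ((incM src tgt * diagonal b * (incM src tgt)ᵀ) *ᵥ v) = 0) (a c : Fin (n+1)) :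
    v a = v c := by
  rw [dotProduct_mul_diagonal_mul_transpose_mulVec] at hv
  have hflow : ∀ l, (v ᵥ* incM src tgt) l = 0 := fun l => by
    have := (Finset.sum_eq_zero_iff_of_nonneg fun l _ => mul_nonneg (hb l).le (sq_nonneg _)).mp
      hv l (Finset.mem_univ l)
    simpa [(hb l).ne'] using this
  refine (hconn.preconnected a c).eq_of_forall_adj fun x y hxy => ?_
  rw [netGraph, SimpleGraph.fromRel_adj] at hxy
  obtain ⟨-, ⟨l, rfl, rfl⟩ | ⟨l, rfl, rfl⟩⟩ := hxy
  · exact eq_of_vecMul_incM_eq_zero src tgt v l (hflow l)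
  · exact (eq_of_vecMul_incM_eq_zero src tgt v l (hflow l)).symm

theorem isUnit_reduced_laplacian (src tgt : Fin m → Fin (n+1)) (b : Fin m → ℝ)
    (hb : ∀ l, 0 < b l) (hconn : (netGraph src tgt).Connected) :
    IsUnit (dropLastMat n * (incM src tgt * diagonal b * (incM src tgt)ᵀ) * (dropLastMat n)ᵀ) := by
  set L := incM src tgt * diagonal b * (incM src tgt)ᵀ
  set P := dropLastMat n
  rw [isUnit_iff_isUnit_det, isUnit_iff_ne_zero]
  intro hdet
  obtain ⟨x, hx0, hx⟩ := exists_mulVec_eq_zero_iff.mpr hdet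
  have hv : (Pᵀ *ᵥ x) ⬝ᵥ (L *ᵥ (Pᵀ *ᵥ x)) = 0 := by
    rw [← dotProduct_mul_mul_transpose_mulVec, hx, dotProduct_zero]
  refine hx0 (funext fun i => ?_)
  rw [← transpose_dropLastMat_mulVec_castSucc x i,
    eq_of_dotProduct_laplacian_mulVec_eq_zero src tgt b hb hconn _ hv _ (Fin.last n),
    transpose_dropLastMat_mulVec_last, Pi.zero_apply]

theorem CmFmat_mul_BmFmat_mul_transpose (src tgt : Fin m → Fin (n+1)) (b : Fin m → ℝ)
    (F : Finset (Fin m)) :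
    CmFmat src tgt F * BmFmat b F * (CmFmat src tgt F)ᵀ =
      incM src tgt * Matrix.diagonal b * (incM src tgt)ᵀ -
        CFmat src tgt F * BFmat b F * (CFmat src tgt F)ᵀ := by
  ext i j
  rw [Matrix.sub_apply, Matrix.mul_apply, Matrix.mul_apply, Matrix.mul_apply,
    ← Finset.sum_sub_distrib]
  refine Finset.sum_congr rfl fun l _ => ?_
  rw [BFmat, BmFmat, Matrix.mul_diagonal, Matrix.mul_diagonal, Matrix.mul_diagonal]
  by_cases hl : l ∈ F <;> simp [CFmat, CmFmat, maskIn, maskOut, hl]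

theorem woodbury_pre_post_contingency_general
    {n m : ℕ} (src tgt : Fin m → Fin (n+1))
    (b : Fin m → ℝ) (hb : ∀ l, 0 < b l)
    (F : Finset (Fin m))
    (hconnPre : (netGraph src tgt).Connected)
    (hinv : IsUnit (1 - BFmat b F * (CFmat src tgt F)ᵀ * Amat src tgt b * CFmat src tgt F)) :
    AmFmat src tgt b F =
      Amat src tgt b + Amat src tgt b * CFmat src tgt F *
        (1 - BFmat b F * (CFmat src tgt F)ᵀ * Amat src tgt b * CFmat src tgt F)⁻¹ *
        BFmat b F * (CFmat src tgt F)ᵀ * Amat src tgt b := by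
  rw [Amat, AmatL_eq_compressedInv] at hinv ⊢
  rw [AmFmat, CmFmat_mul_BmFmat_mul_transpose, AmatL_eq_compressedInv]
  exact compressedInv_sub_mul_mul _ _ _ _ _ (isUnit_reduced_laplacian src tgt b hb hconnPre) hinv

/-- Woodbury relation between pre- and post-contingency matrices.
If `I − B_F C_Fᵀ A C_F` is invertible, then
`A_{−F} = A + A C_F (I − B_F C_Fᵀ A C_F)⁻¹ B_F C_Fᵀ A`. -/
theorem woodbury_pre_post_contingency
    {n m : ℕ} (src tgt : Fin m → Fin (n+1)) (hsl : ∀ l, src l ≠ tgt l)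
    (b : Fin m → ℝ) (hb : ∀ l, 0 < b l)
    (F : Finset (Fin m))
    (hconnPre : (netGraph src tgt).Connected)
    (hconnPost : (netGraphOn src tgt {l | l ∉ F}).Connected)
    (hinv : IsUnit (1 - BFmat b F * (CFmat src tgt F)ᵀ * Amat src tgt b * CFmat src tgt F)) :
    AmFmat src tgt b F =
      Amat src tgt b + Amat src tgt b * CFmat src tgt F *
        (1 - BFmat b F * (CFmat src tgt F)ᵀ * Amat src tgt b * CFmat src tgt F)⁻¹ *
        BFmat b F * (CFmat src tgt F)ᵀ * Amat src tgt b :=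
  woodbury_pre_post_contingency_general src tgt b hb F hconnPre hinv
end
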